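/- arXiv:1201.0108 — 5 statements merged into one kernel-verified Lean document; each statement's English description precedes it below -/
import Mathlib

section
/- For any real n×n matrix y = (y_{ij}), the average over all permutations π of {1,...,n} of max_{1≤i≤n} |y_{iπ(i)}| satisfies (1/(2n))·∑_{k=1}^n s(k) ≤ Ave_π max_{1≤i≤n} |y_{iπ(i)}| ≤ (1/n)·∑_{k=1}^n s(k), where s(1) ≥ s(2) ≥ ... ≥ s(n²) is the decreasing rearrangement of the n² numbers |y_{ij}|. -/
open Finset

/-- An Orlicz function: convex on `[0,∞)`, vanishing at `0`, positive on `(0,∞)`. -/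
def IsOrlicz (M : ℝ → ℝ) : Prop :=
  ConvexOn ℝ (Set.Ici 0) M ∧ M 0 = 0 ∧ ∀ t : ℝ, 0 < t → 0 < M t

/-- Legendre conjugate `M*(x) = sup_{t ≥ 0} (x t − M t)`. -/
noncomputable def orliczConj (M : ℝ → ℝ) (x : ℝ) : ℝ :=
  sSup {v : ℝ | ∃ t : ℝ, 0 ≤ t ∧ v = x * t - M t}

/-- Musielak-Orlicz (Luxemburg-type) functional `‖x‖_{Σ M_i}`. -/
noncomputable def musielakNorm {n : ℕ} (M : Fin n → ℝ → ℝ) (x : Fin n → ℝ) : ℝ :=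
  sInf {ρ : ℝ | 0 < ρ ∧ ∑ i, M i (|x i| / ρ) ≤ 1}

/-- Average over all permutations of `{1,…,n}`. -/
noncomputable def permAve (n : ℕ) (f : Equiv.Perm (Fin n) → ℝ) : ℝ :=
  (∑ π : Equiv.Perm (Fin n), f π) / (Nat.factorial n : ℝ)

/-- Maximum of a function on a nonempty `Fin n`. -/
noncomputable def maxFin {n : ℕ} (hn : 0 < n) (g : Fin n → ℝ) : ℝ :=
  Finset.univ.sup' (Finset.univ_nonempty_iff.mpr ⟨⟨0, hn⟩⟩) g

/-!
Write `a p = |y p.1 p.2|` for positions `p = (i, j)`, let `T` be the positions of the `n` largest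
entries and `t` the smallest entry on `T`; a position lies on the graph of exactly `(n - 1)!`
permutations, and two distinct positions on at most `(n - 2)!` of them.

Upper bound: `max_i a (i, π i) ≤ t + ∑_i (a (i, π i) - t)⁺`, whose average over `π` is
`t + (1/n) ∑_p (a p - t)⁺ = (1/n) ∑_{p ∈ T} a p`.

Lower bound (second moment): if `H` is the part of `T` on the graph of `π`, then
`2 max_H a ≥ 2 ∑_H a - ∑_{p ≠ q ∈ H} min (a p) (a q)`. Summed over `π`, the main term gives
`2 (n - 1)! ∑_T a`, the error term at most `(n - 2)! (#T - 1) ∑_T a ≤ (n - 1)! ∑_T a`.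
-/

open Equiv Fintype
open scoped Nat

theorem Nat.sub_one_mul_factorial_sub_two_le (n : ℕ) :
    ((n : ℝ) - 1) * (n - 2)! ≤ (n - 1)! := by
  rcases n with _ | _ | k
  · norm_num
  · norm_num
  · rw [show k + 1 + 1 - 2 = k by omega, show k + 1 + 1 - 1 = k + 1 by omega,
      show ((k + 1 + 1 : ℕ) : ℝ) - 1 = (k + 1 : ℕ) by push_cast; ring]
    exact_mod_cast (Nat.factorial_succ k).ge

namespace Finset

variable {β : Type*} [DecidableEq β]

theorem sum_offDiag_apply_snd (T : Finset β) (f : β → ℝ) :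
    ∑ x ∈ T.offDiag, f x.2 = (#T - 1) * ∑ p ∈ T, f p := by
  have h := sum_union (f := fun x : β × β => f x.2) (disjoint_diag_offDiag (s := T))
  rw [diag_union_offDiag, sum_product, sum_diag] at h
  simp only [sum_const, nsmul_eq_mul] at h
  linarith

theorem two_mul_sum_le_two_mul_add_sum_offDiag_min (H : Finset β) {a : β → ℝ}
    (ha : ∀ p ∈ H, 0 ≤ a p) {M : ℝ} (hM₀ : 0 ≤ M) (hM : ∀ p ∈ H, a p ≤ M) :
    2 * ∑ p ∈ H, a p ≤ 2 * M + ∑ x ∈ H.offDiag, min (a x.1) (a x.2) := by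
  rcases H.eq_empty_or_nonempty with rfl | hne
  · simpa using hM₀
  obtain ⟨m, hm, hmax⟩ := exists_max_image H a hne
  have hsub : {m} ×ˢ H.erase m ∪ H.erase m ×ˢ {m} ⊆ H.offDiag := by
    intro x hx
    simp only [mem_union, mem_product, mem_singleton, mem_erase] at hx
    rw [mem_offDiag]
    rcases hx with ⟨rfl, hne, hx⟩ | ⟨⟨hne, hx⟩, rfl⟩
    exacts [⟨hm, hx, hne.symm⟩, ⟨hx, hm, hne⟩]
  have hdisj : Disjoint ({m} ×ˢ H.erase m) (H.erase m ×ˢ {m}) :=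
    disjoint_product.2 (Or.inl (disjoint_singleton_left.2 (notMem_erase m H)))
  have hpairs : ∑ x ∈ {m} ×ˢ H.erase m ∪ H.erase m ×ˢ {m}, min (a x.1) (a x.2)
      = 2 * ∑ q ∈ H.erase m, a q := by
    rw [sum_union hdisj, sum_product, sum_product_right, sum_singleton, sum_singleton, two_mul]
    congr 1 <;> refine sum_congr rfl fun q hq => ?_
    exacts [min_eq_right (hmax q (mem_of_mem_erase hq)),
      min_eq_left (hmax q (mem_of_mem_erase hq))]
  have hmin : ∀ x ∈ H.offDiag, 0 ≤ min (a x.1) (a x.2) := fun x hx =>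
    le_min (ha _ (mem_offDiag.1 hx).1) (ha _ (mem_offDiag.1 hx).2.1)
  calc 2 * ∑ p ∈ H, a p = 2 * a m + 2 * ∑ q ∈ H.erase m, a q := by
        rw [← add_sum_erase H a hm, mul_add]
    _ ≤ 2 * M + ∑ x ∈ H.offDiag, min (a x.1) (a x.2) := by
        rw [← hpairs]
        gcongr 2 * ?_ + ?_
        · exact hM m hm
        · exact sum_le_sum_of_subset_of_nonneg hsub fun x hx _ => hmin x hx

end Finset

namespace Equiv.Perm

variable {α : Type*} [Fintype α] [DecidableEq α]

theorem card_filter_and_apply_eq_swap (P : Perm α → Prop) [DecidablePred P] {j j' : α}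
    (hP : ∀ π, P (swap j j' * π) ↔ P π) (i : α) :
    #{π | P π ∧ π i = j} = #{π | P π ∧ π i = j'} :=
  card_equiv (Equiv.mulLeft (swap j j')) fun π => by
    simp [hP, swap_apply_eq_iff]

theorem card_filter_apply_eq (i j : α) :
    #{π : Perm α | π i = j} = (card α - 1)! := by
  have hfiber (j' : α) : #{π : Perm α | π i = j'} = #{π : Perm α | π i = j} := by
    simpa using card_filter_and_apply_eq_swap (fun _ => True) (j := j') (j' := j) (by simp) i
  have hsum := card_eq_sum_card_fiberwise (s := univ) (t := univ) (f := fun π : Perm α => π i)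
    (fun _ _ => mem_univ _)
  simp only [Finset.card_univ, Fintype.card_perm, hfiber, sum_const, smul_eq_mul] at hsum
  have hcard : 0 < card α := card_pos_iff.2 ⟨i⟩
  refine Nat.eq_of_mul_eq_mul_left hcard ?_
  rw [← hsum, Nat.mul_factorial_pred hcard.ne']

theorem card_filter_apply_eq_and_apply_eq {i i' j j' : α} (hi : i ≠ i') (hj : j ≠ j') :
    #{π : Perm α | π i = j ∧ π i' = j'} = (card α - 2)! := by
  have hfiber (j'' : α) (hj'' : j'' ≠ j) :
      #{π : Perm α | π i = j ∧ π i' = j''} = #{π : Perm α | π i = j ∧ π i' = j'} :=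
    card_filter_and_apply_eq_swap (fun π => π i = j) (fun π => by
      rw [Perm.mul_apply, swap_apply_eq_iff, swap_apply_of_ne_of_ne hj''.symm hj]) i'
  have hsum := card_eq_sum_card_fiberwise (s := {π : Perm α | π i = j}) (t := univ.erase j)
    (f := fun π => π i') (fun π hπ => by
      rw [mem_coe, mem_filter] at hπ
      simpa [← hπ.2] using hi.symm)
  simp only [filter_filter, card_filter_apply_eq] at hsum
  rw [sum_congr rfl fun j'' hj'' => hfiber j'' (ne_of_mem_erase hj''), sum_const,
    card_erase_of_mem (mem_univ _), Finset.card_univ, smul_eq_mul] at hsum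
  have hcard : 1 < card α := one_lt_card_iff.2 ⟨j, j', hj⟩
  refine Nat.eq_of_mul_eq_mul_left (Nat.sub_pos_of_lt hcard) ?_
  rw [← hsum, show card α - 2 = card α - 1 - 1 by omega, Nat.mul_factorial_pred (by omega)]

theorem card_filter_apply_eq_and_apply_eq_le {p q : α × α} (hpq : p ≠ q) :
    #{π : Perm α | π p.1 = p.2 ∧ π q.1 = q.2} ≤ (card α - 2)! := by
  by_cases hi : p.1 = q.1
  · rw [card_eq_zero.2 (filter_eq_empty_iff.2 fun π _ h =>
      hpq (Prod.ext hi (h.1.symm.trans (hi ▸ h.2))))]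
    exact Nat.zero_le _
  by_cases hj : p.2 = q.2
  · rw [card_eq_zero.2 (filter_eq_empty_iff.2 fun π _ h =>
      hi (π.injective (h.1.trans (hj.trans h.2.symm))))]
    exact Nat.zero_le _
  exact (card_filter_apply_eq_and_apply_eq hi hj).le

theorem sum_sum_filter_apply_eq (T : Finset (α × α)) (w : α × α → ℝ) :
    ∑ π : Perm α, ∑ p ∈ T with π p.1 = p.2, w p = (card α - 1)! * ∑ p ∈ T, w p := by
  rw [sum_comm' (t' := T) (s' := fun p => {π : Perm α | π p.1 = p.2})
    (fun _ _ => by simp [and_comm])]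
  simp [card_filter_apply_eq, mul_sum]

theorem sum_sum_offDiag_filter_apply_eq_le (T : Finset (α × α)) (w : (α × α) × (α × α) → ℝ)
    (hw : ∀ x ∈ T.offDiag, 0 ≤ w x) :
    ∑ π : Perm α, ∑ x ∈ {p ∈ T | π p.1 = p.2}.offDiag, w x
      ≤ (card α - 2)! * ∑ x ∈ T.offDiag, w x := by
  rw [sum_comm' (t' := T.offDiag)
    (s' := fun x => {π : Perm α | π x.1.1 = x.1.2 ∧ π x.2.1 = x.2.2})
    (fun _ _ => by simp only [mem_offDiag, mem_filter, mem_univ, true_and]; tauto), mul_sum]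
  refine sum_le_sum fun x hx => ?_
  rw [sum_const, nsmul_eq_mul]
  exact mul_le_mul_of_nonneg_right
    (by exact_mod_cast card_filter_apply_eq_and_apply_eq_le (mem_offDiag.1 hx).2.2) (hw x hx)

section Nonempty

variable [Nonempty α]

theorem sum_sup'_le_factorial_mul_sum (a : α × α → ℝ) {T : Finset (α × α)} (hT : #T = card α)
    {t : ℝ} (hge : ∀ p ∈ T, t ≤ a p) (hle : ∀ p ∉ T, a p ≤ t) :
    ∑ π : Perm α, univ.sup' univ_nonempty (fun i => a (i, π i))
      ≤ (card α - 1)! * ∑ p ∈ T, a p := by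
  have hpoint (π : Perm α) : univ.sup' univ_nonempty (fun i => a (i, π i))
      ≤ t + ∑ p ∈ univ with π p.1 = p.2, max (a p - t) 0 := by
    refine sup'_le _ _ fun i _ => ?_
    have := single_le_sum (s := {p | π p.1 = p.2}) (f := fun p => max (a p - t) 0)
      (fun _ _ => le_max_right _ _) (a := (i, π i)) (by simp)
    linarith [le_max_left (a (i, π i) - t) 0]
  have hexcess : ∑ p, max (a p - t) 0 = ∑ p ∈ T, a p - card α * t := by
    rw [← sum_subset (subset_univ T) fun p _ hp => max_eq_right (sub_nonpos.2 (hle p hp)),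
      sum_congr rfl fun p hp => max_eq_left (sub_nonneg.2 (hge p hp)), sum_sub_distrib,
      sum_const, hT, nsmul_eq_mul]
  calc ∑ π : Perm α, univ.sup' univ_nonempty (fun i => a (i, π i))
      ≤ ∑ π : Perm α, (t + ∑ p ∈ univ with π p.1 = p.2, max (a p - t) 0) :=
        sum_le_sum fun π _ => hpoint π
    _ = (card α)! * t + (card α - 1)! * (∑ p ∈ T, a p - card α * t) := by
        rw [sum_add_distrib, sum_sum_filter_apply_eq, hexcess, sum_const, Finset.card_univ,
          card_perm, nsmul_eq_mul]
    _ = (card α - 1)! * ∑ p ∈ T, a p := by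
        rw [← Nat.mul_factorial_pred card_ne_zero]
        push_cast
        ring

theorem factorial_mul_sum_le_two_mul_sum_sup' {a : α × α → ℝ} (ha : ∀ p, 0 ≤ a p)
    {T : Finset (α × α)} (hT : #T ≤ card α) :
    (card α - 1)! * ∑ p ∈ T, a p
      ≤ 2 * ∑ π : Perm α, univ.sup' univ_nonempty (fun i => a (i, π i)) := by
  have hpoint (π : Perm α) : 2 * ∑ p ∈ T with π p.1 = p.2, a p
      ≤ 2 * univ.sup' univ_nonempty (fun i => a (i, π i))
        + ∑ x ∈ {p ∈ T | π p.1 = p.2}.offDiag, min (a x.1) (a x.2) := by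
    refine two_mul_sum_le_two_mul_add_sum_offDiag_min _ (fun p _ => ha p)
      ((ha _).trans (le_sup' (fun i => a (i, π i)) (mem_univ (Classical.arbitrary α))))
      fun ⟨i, j⟩ hp => ?_
    obtain ⟨-, rfl : π i = j⟩ := mem_filter.1 hp
    exact le_sup' (fun i => a (i, π i)) (mem_univ i)
  have hpairs : ∑ π : Perm α, ∑ x ∈ {p ∈ T | π p.1 = p.2}.offDiag, min (a x.1) (a x.2)
      ≤ (card α - 1)! * ∑ p ∈ T, a p :=
    calc _ ≤ (card α - 2)! * ∑ x ∈ T.offDiag, min (a x.1) (a x.2) :=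
          sum_sum_offDiag_filter_apply_eq_le T _ fun x _ => le_min (ha _) (ha _)
      _ ≤ (card α - 2)! * ∑ x ∈ T.offDiag, a x.2 := by
          gcongr with x
          exact min_le_right _ _
      _ ≤ ((card α : ℝ) - 1) * (card α - 2)! * ∑ p ∈ T, a p := by
          rw [sum_offDiag_apply_snd, ← mul_assoc, mul_comm ((card α - 2)! : ℝ)]
          gcongr
          exact sum_nonneg fun p _ => ha p
      _ ≤ (card α - 1)! * ∑ p ∈ T, a p := by
          gcongr
          · exact sum_nonneg fun p _ => ha p
          · exact Nat.sub_one_mul_factorial_sub_two_le _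
  have hsum := sum_le_sum fun π (_ : π ∈ univ) => hpoint π
  rw [← mul_sum, sum_sum_filter_apply_eq, sum_add_distrib, ← mul_sum] at hsum
  linarith

end Nonempty

end Equiv.Perm

namespace Antitone

variable {β : Type*} {N m : ℕ} {s : Fin N → ℝ} (e : Fin N ≃ β) (h : m ≤ N)

theorem le_apply_symm_of_mem_map_castLEEmb (hs : Antitone s) {k : Fin N} (hk : (k : ℕ) + 1 = m)
    {p : β} (hp : p ∈ univ.map ((Fin.castLEEmb h).trans e.toEmbedding)) :
    s k ≤ s (e.symm p) := by
  obtain ⟨j, -, rfl⟩ := mem_map.1 hp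
  simpa using hs (show Fin.castLE h j ≤ k from Fin.le_def.2 (by simp; omega))

theorem apply_symm_le_of_notMem_map_castLEEmb (hs : Antitone s) {k : Fin N} (hk : (k : ℕ) + 1 = m)
    {p : β} (hp : p ∉ univ.map ((Fin.castLEEmb h).trans e.toEmbedding)) :
    s (e.symm p) ≤ s k := by
  refine hs (le_of_not_gt fun hlt => hp (mem_map.2 ⟨⟨e.symm p, by omega⟩, mem_univ _, ?_⟩))
  simp [Fin.castLE]

end Antitone

/-- Kwapień–Schütt: the permutation average of `max_i |y_{iπ(i)}|` is, up to the
factor 2, the average of the `n` largest entries of the matrix `(|y_{ij}|)`. -/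
theorem permAve_max_ge_and_le_sum_largest
    (n : ℕ) (hn : 0 < n) (y : Fin n → Fin n → ℝ)
    (s : Fin (n * n) → ℝ) (e : Fin (n * n) ≃ Fin n × Fin n)
    (hs_anti : ∀ k l : Fin (n * n), k ≤ l → s l ≤ s k)
    (hs_val : ∀ k : Fin (n * n), s k = |y (e k).1 (e k).2|) :
    (1 / (2 * n)) * ∑ k : Fin n, s ⟨k.1, lt_of_lt_of_le k.2 (Nat.le_mul_of_pos_left n hn)⟩
      ≤ permAve n (fun π => maxFin hn (fun i => |y i (π i)|)) ∧
    permAve n (fun π => maxFin hn (fun i => |y i (π i)|))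
      ≤ (1 / n) * ∑ k : Fin n, s ⟨k.1, lt_of_lt_of_le k.2 (Nat.le_mul_of_pos_left n hn)⟩ := by
  have : Nonempty (Fin n) := ⟨⟨0, hn⟩⟩
  have hs : Antitone s := hs_anti
  have hnn : n ≤ n * n := Nat.le_mul_of_pos_left n hn
  set a : Fin n × Fin n → ℝ := fun p => |y p.1 p.2|
  have hsa (p : Fin n × Fin n) : a p = s (e.symm p) := by simp [a, hs_val]
  set T := univ.map ((Fin.castLEEmb hnn).trans e.toEmbedding)
  have hT : #T = card (Fin n) := by simp [T]
  have hST : ∑ p ∈ T, a p = ∑ k : Fin n, s ⟨k.1, lt_of_lt_of_le k.2 hnn⟩ := by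
    simp [T, hsa, Fin.castLE]
  have ht : ((⟨n - 1, by omega⟩ : Fin (n * n)) : ℕ) + 1 = n := Nat.sub_add_cancel hn
  have hupper := Perm.sum_sup'_le_factorial_mul_sum a hT
    (fun p hp => (hs.le_apply_symm_of_mem_map_castLEEmb e hnn ht hp).trans_eq (hsa p).symm)
    (fun p hp => (hsa p).trans_le (hs.apply_symm_le_of_notMem_map_castLEEmb e hnn ht hp))
  have hlower := Perm.factorial_mul_sum_le_two_mul_sum_sup' (fun p => abs_nonneg (y p.1 p.2)) hT.le
  rw [Fintype.card_fin, hST] at hupper hlower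
  have hfac : (n ! : ℝ) = n * (n - 1)! := by exact_mod_cast (Nat.mul_factorial_pred hn.ne').symm
  unfold permAve maxFin
  rw [hfac]
  constructor
  · rw [le_div_iff₀ (by positivity)]
    field_simp
    linarith
  · rw [div_le_iff₀ (by positivity)]
    field_simp
    linarith
end

section
/- Under the hypotheses of the structural lemma (y_{i1} ≥ ... ≥ y_{in} > 0, ∑_j y_{ij} = 1, and M_i convex with M_i(∑_{j=1}^k y_{ij}) = k/n for all k), the inclusion B ⊆ B_{ΣM_i} holds, where B is the convex hull of the vectors (ε_i ∑_{j=1}^{ℓ_i} y_{ij})_{i=1}^n with ∑ℓ_i ≤ n, ε_i = ±1, and B_{ΣM_i} = {x : ∑_i M_i(|x_i|) ≤ 1}. -/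
/-!
A convex `M` with `M 0 = 0` may dip below zero near `0`, so `x ↦ M |x|` need not be convex.
Its positive part `max M 0` is still convex and vanishes at `0`, but is also minimal there,
hence nondecreasing on `[0, ∞)`; therefore `x ↦ ∑ i, max (M i |x i|) 0` is convex and its
sublevel set `{· ≤ 1}` is a convex subset of `B_{ΣM_i}`. A generator with lengths `ℓ i` has
`i`-th coordinate of absolute value `∑_{j < ℓ i} y i j`, where `M i` equals `ℓ i / n ≥ 0`,
so it lies in that sublevel set because `∑ ℓ i ≤ n`.
-/

open Finset

theorem ConvexOn.monotoneOn_Ici_of_isMinOn {𝕜 β : Type*} [Field 𝕜] [LinearOrder 𝕜]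
    [IsStrictOrderedRing 𝕜] [AddCommMonoid β] [LinearOrder β] [IsOrderedCancelAddMonoid β]
    [Module 𝕜 β] [PosSMulStrictMono 𝕜 β] {f : 𝕜 → β} {a : 𝕜}
    (hf : ConvexOn 𝕜 (Set.Ici a) f) (hmin : IsMinOn f (Set.Ici a) a) :
    MonotoneOn f (Set.Ici a) := by
  intro x hx z hz hxz
  rcases (Set.mem_Ici.mp hx).eq_or_lt with rfl | hax
  · exact hmin hz
  · exact hf.le_right_of_left_le'' Set.self_mem_Ici hz hax hxz (hmin hx)

theorem ConvexOn.comp_abs {β : Type*} [AddCommMonoid β] [PartialOrder β] [Module ℝ β]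
    {f : ℝ → β} (hf : ConvexOn ℝ (Set.Ici 0) f) (hmono : MonotoneOn f (Set.Ici 0)) :
    ConvexOn ℝ Set.univ fun x => f |x| := by
  refine ⟨convex_univ, fun x _ y _ a b ha hb hab => ?_⟩
  have htri : |a • x + b • y| ≤ a • |x| + b • |y| := by
    simpa only [smul_eq_mul, abs_mul, abs_of_nonneg ha, abs_of_nonneg hb] using
      abs_add_le (a * x) (b * y)
  calc f |a • x + b • y| ≤ f (a • |x| + b • |y|) :=
        hmono (Set.mem_Ici.2 (abs_nonneg _)) (Set.mem_Ici.2 ((abs_nonneg _).trans htri)) htri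
    _ ≤ a • f |x| + b • f |y| := hf.2 (abs_nonneg x) (abs_nonneg y) ha hb hab

theorem ConvexOn.sum {𝕜 E β ι : Type*} [Semiring 𝕜] [PartialOrder 𝕜] [AddCommMonoid E]
    [AddCommMonoid β] [PartialOrder β] [IsOrderedAddMonoid β] [SMul 𝕜 E] [Module 𝕜 β]
    {s : Set E} {f : ι → E → β} (t : Finset ι) (hs : Convex 𝕜 s)
    (hf : ∀ i ∈ t, ConvexOn 𝕜 s (f i)) : ConvexOn 𝕜 s fun x => ∑ i ∈ t, f i x := by
  classical
  induction t using Finset.induction_on with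
  | empty => simpa only [Finset.sum_empty] using convexOn_const (0 : β) hs
  | insert i t hi ih =>
    simp only [Finset.sum_insert hi]
    exact (hf i (mem_insert_self i t)).add (ih fun j hj => hf j (mem_insert_of_mem hj))

theorem convexOn_sum_apply_abs {ι : Type*} [Fintype ι] {M : ι → ℝ → ℝ}
    (hconv : ∀ i, ConvexOn ℝ (Set.Ici 0) (M i)) (hmono : ∀ i, MonotoneOn (M i) (Set.Ici 0)) :
    ConvexOn ℝ Set.univ fun x : ι → ℝ => ∑ i, M i |x i| :=
  ConvexOn.sum univ convex_univ fun i _ =>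
    ((hconv i).comp_abs (hmono i)).comp_linearMap (LinearMap.proj (R := ℝ) (φ := fun _ => ℝ) i)

theorem apply_sum_lt_eq_div {n : ℕ} {y : Fin n → ℝ} {M : ℝ → ℝ} (hzero : M 0 = 0)
    (hval : ∀ k : Fin n, M (∑ j : Fin n, if j ≤ k then y j else 0) = ((k : ℕ) + 1) / n)
    {ℓ : ℕ} (hℓ : ℓ ≤ n) :
    M (∑ j : Fin n, if (j : ℕ) < ℓ then y j else 0) = ℓ / n := by
  rcases ℓ with _ | k
  · simp [hzero]
  · have hsum : (∑ j : Fin n, if (j : ℕ) < k + 1 then y j else 0) =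
        ∑ j : Fin n, if j ≤ ⟨k, hℓ⟩ then y j else 0 := by
      simp only [Fin.le_def, Nat.lt_succ_iff]
    rw [hsum, hval]
    simp

theorem apply_abs_mul_sum_lt_eq_div {n : ℕ} {y : Fin n → ℝ} {M : ℝ → ℝ}
    (hy : ∀ j, 0 ≤ y j) (hzero : M 0 = 0)
    (hval : ∀ k : Fin n, M (∑ j : Fin n, if j ≤ k then y j else 0) = ((k : ℕ) + 1) / n)
    {ℓ : ℕ} (hℓ : ℓ ≤ n) {ε : ℝ} (hε : |ε| = 1) :
    M |ε * ∑ j : Fin n, if (j : ℕ) < ℓ then y j else 0| = ℓ / n := by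
  have hnonneg : 0 ≤ ∑ j : Fin n, if (j : ℕ) < ℓ then y j else 0 :=
    sum_nonneg fun j _ => by split_ifs <;> simp [hy j]
  rw [abs_mul, hε, one_mul, abs_of_nonneg hnonneg, apply_sum_lt_eq_div hzero hval hℓ]

theorem convexHull_subset_ball_general (n : ℕ) (y : Fin n → Fin n → ℝ)
    (M : Fin n → ℝ → ℝ)
    (hpos : ∀ i j, 0 < y i j)
    (hconv : ∀ i, ConvexOn ℝ (Set.Ici 0) (M i))
    (hzero : ∀ i, M i 0 = 0)
    (hval : ∀ i (k : Fin n),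
      M i (∑ j : Fin n, if j ≤ k then y i j else 0) = ((k : ℕ) + 1) / n) :
    convexHull ℝ {v : Fin n → ℝ | ∃ (ℓ : Fin n → ℕ) (ε : Fin n → ℝ),
        (∑ i, ℓ i ≤ n) ∧ (∀ i, ε i = 1 ∨ ε i = -1) ∧
        v = fun i => ε i * ∑ j : Fin n, if (j : ℕ) < ℓ i then y i j else 0}
      ⊆ {x : Fin n → ℝ | ∑ i, M i (|x i|) ≤ 1} := by
  have hconvMax : ∀ i, ConvexOn ℝ (Set.Ici 0) (fun t => max (M i t) 0) :=
    fun i => (hconv i).sup (convexOn_const 0 (convex_Ici 0))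
  have hmonoMax : ∀ i, MonotoneOn (fun t => max (M i t) 0) (Set.Ici 0) :=
    fun i => (hconvMax i).monotoneOn_Ici_of_isMinOn fun t _ => by simp [hzero i]
  refine (convexHull_min ?_ ?_).trans (?_ : {x | ∑ i, max (M i |x i|) 0 ≤ 1} ⊆ _)
  · rintro _ ⟨ℓ, ε, hℓ, hε, rfl⟩
    have hgen (i : Fin n) :
        M i |ε i * ∑ j : Fin n, if (j : ℕ) < ℓ i then y i j else 0| = ℓ i / n :=
      apply_abs_mul_sum_lt_eq_div (fun j => (hpos i j).le) (hzero i) (hval i)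
        ((single_le_sum (fun j _ => (ℓ j).zero_le) (mem_univ i)).trans hℓ)
        (by rcases hε i with h | h <;> simp [h])
    calc ∑ i, max (M i |ε i * ∑ j : Fin n, if (j : ℕ) < ℓ i then y i j else 0|) 0
        = (∑ i, (ℓ i : ℝ)) / n := by
          rw [sum_div]; exact sum_congr rfl fun i _ => by rw [hgen, max_eq_left (by positivity)]
      _ ≤ 1 := div_le_one_of_le₀ (by exact_mod_cast hℓ) n.cast_nonneg
  · simpa only [Set.sep_univ] using (convexOn_sum_apply_abs hconvMax hmonoMax).convex_le 1
  · intro x hx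
    simp only [Set.mem_ofPred_eq] at hx ⊢
    exact (sum_le_sum fun i _ => le_max_left _ _).trans hx

/-- The easy inclusion of the structural lemma: `B ⊆ B_{Σ M_i}`. -/
theorem convexHull_subset_ball (n : ℕ) (y : Fin n → Fin n → ℝ)
    (M : Fin n → ℝ → ℝ)
    (hdec : ∀ i, ∀ j k : Fin n, j ≤ k → y i k ≤ y i j)
    (hpos : ∀ i j, 0 < y i j)
    (hsum : ∀ i, ∑ j, y i j = 1)
    (hconv : ∀ i, ConvexOn ℝ (Set.Ici 0) (M i))
    (hzero : ∀ i, M i 0 = 0)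
    (hval : ∀ i (k : Fin n),
      M i (∑ j : Fin n, if j ≤ k then y i j else 0) = ((k : ℕ) + 1) / n) :
    convexHull ℝ {v : Fin n → ℝ | ∃ (ℓ : Fin n → ℕ) (ε : Fin n → ℝ),
        (∑ i, ℓ i ≤ n) ∧ (∀ i, ε i = 1 ∨ ε i = -1) ∧
        v = fun i => ε i * ∑ j : Fin n, if (j : ℕ) < ℓ i then y i j else 0}
      ⊆ {x : Fin n → ℝ | ∑ i, M i (|x i|) ≤ 1} :=
  convexHull_subset_ball_general n y M hpos hconv hzero hval
end

section
/- Let n ≤ N and a ∈ ℝ^{n×N} with a_{i1} ≥ ... ≥ a_{iN} > 0 and ∑_{j=1}^N a_{ij} = 1 for each i. Define ‖x‖_a = max{∑_{i=1}^n (∑_{j=1}^{ℓ_i} a_{ij})|x_i| : ℓ_i ≥ 0, ∑_i ℓ_i ≤ N}. Let M_i be Orlicz functions with M_i*(∑_{j=1}^m a_{ij}) = m/N for all m = 1,...,N. Then for all x ∈ ℝⁿ, (1/2)‖x‖_a ≤ ‖x‖_{ΣM_i} ≤ 2‖x‖_a. -/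
/-!
Write `P_i(m) = a_{i1} + ⋯ + a_{im}`, so that `M_i*(P_i(m)) = m/N`. By Young's inequality
`P_i(ℓ_i) t ≤ M_i(t) + ℓ_i/N`; taking `t = |x_i|/ρ` and summing over a selection with
`∑ ℓ_i ≤ N` gives `‖x‖_a ≤ 2ρ` whenever `∑ M_i(|x_i|/ρ) ≤ 1`.

Conversely, by convexity and `M_i(0) = 0`, `M_i(t) ≤ s t` whenever `s t < M_i*(s)`. For
`ρ > 2‖x‖_a` and `y_i = |x_i|/ρ`, let `k_i` be the last `m` up to which `m/N ≤ P_i(m) y_i`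
holds throughout. Then `M_i(y_i) ≤ P_i(k_i + 1) y_i ≤ P_i(k_i) y_i + 1/N`, the `k_i` form an
admissible selection with `∑ k_i / N ≤ 1/2`, and a second selection raising as many `k_i` as
the budget allows shows `∑ M_i(y_i) ≤ 1/2 + 1/2`.
-/

open Finset

section PrefixSum

variable {N : ℕ} (b : Fin N → ℝ)

def prefixSum (m : ℕ) : ℝ := ∑ j : Fin N, if (j : ℕ) < m then b j else 0

@[simp] lemma prefixSum_zero : prefixSum b 0 = 0 := by simp [prefixSum]

lemma prefixSum_of_le {m : ℕ} (hm : N ≤ m) : prefixSum b m = ∑ j, b j :=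
  sum_congr rfl fun j _ => if_pos (j.isLt.trans_le hm)

lemma sum_ite_le_eq_prefixSum (m : Fin N) :
    (∑ j : Fin N, if j ≤ m then b j else 0) = prefixSum b (m + 1) :=
  sum_congr rfl fun j _ => by simp only [Fin.le_def, Nat.lt_succ_iff]

variable {b}

lemma prefixSum_nonneg (hb : ∀ j, 0 ≤ b j) (m : ℕ) : 0 ≤ prefixSum b m :=
  sum_nonneg fun j _ => by split_ifs <;> simp [hb j]

lemma prefixSum_le_sum (hb : ∀ j, 0 ≤ b j) (m : ℕ) : prefixSum b m ≤ ∑ j, b j :=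
  sum_le_sum fun j _ => by split_ifs <;> simp [hb j]

lemma prefixSum_pos (hb : ∀ j, 0 < b j) {m : ℕ} (hm : 0 < m) (hN : 0 < N) :
    0 < prefixSum b m :=
  sum_pos' (fun j _ => by split_ifs <;> simp [(hb j).le])
    ⟨⟨0, hN⟩, mem_univ _, by simp [hm, hb]⟩

end PrefixSum

section Orlicz

variable {M : ℝ → ℝ} {s t : ℝ}

lemma IsOrlicz.nonneg (hM : IsOrlicz M) (ht : 0 ≤ t) : 0 ≤ M t := by
  rcases ht.eq_or_lt with rfl | ht
  · exact hM.2.1.ge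
  · exact (hM.2.2 t ht).le

lemma mul_sub_le_orliczConj (h : 0 < orliczConj M s) (ht : 0 ≤ t) :
    s * t - M t ≤ orliczConj M s := by
  have hbdd : BddAbove {v : ℝ | ∃ u : ℝ, 0 ≤ u ∧ v = s * u - M u} := by
    by_contra hb
    rw [orliczConj, Real.sSup_of_not_bddAbove hb] at h
    exact h.false
  exact le_csSup hbdd ⟨t, ht, rfl⟩

lemma IsOrlicz.le_mul_of_mul_lt_orliczConj (hM : IsOrlicz M) (hs : 0 < s) (ht : 0 ≤ t)
    (h : s * t < orliczConj M s) : M t ≤ s * t := by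
  rcases ht.eq_or_lt with rfl | ht
  · simp [hM.2.1]
  have hne : {v : ℝ | ∃ u : ℝ, 0 ≤ u ∧ v = s * u - M u}.Nonempty := ⟨_, 0, le_rfl, rfl⟩
  obtain ⟨_, ⟨u, hu, rfl⟩, hlt⟩ := exists_lt_of_lt_csSup hne h
  have hMu := hM.nonneg hu
  have htu : t < u := by nlinarith
  -- the chord of `M` from `0` to `u`: `u * M t ≤ t * M u`
  have hsecant := hM.1.secant_mono_aux1 (Set.mem_Ici.2 le_rfl) hu ht htu
  simp only [sub_zero, hM.2.1, mul_zero, zero_add] at hsecant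
  have : u * M t < u * (s * t) := by
    nlinarith [mul_lt_mul_of_pos_left hlt ht, mul_pos hs (mul_pos ht ht)]
  exact (lt_of_mul_lt_mul_left this (ht.trans htu).le).le

def ConjAtPrefixSums {N : ℕ} (M : ℝ → ℝ) (b : Fin N → ℝ) : Prop :=
  ∀ m : ℕ, 0 < m → m ≤ N → orliczConj M (prefixSum b m) = m / N

section ConjAtPrefixSums

variable {N : ℕ} {b : Fin N → ℝ} {M : ℝ → ℝ} {m : ℕ} {t : ℝ}

lemma ConjAtPrefixSums.prefixSum_mul_le (hconj : ConjAtPrefixSums M b) (hM : IsOrlicz M)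
    (hm : m ≤ N) (ht : 0 ≤ t) : prefixSum b m * t ≤ M t + m / N := by
  rcases Nat.eq_zero_or_pos m with rfl | hm0
  · simpa using hM.nonneg ht
  have hN : (0 : ℝ) < N := by exact_mod_cast hm0.trans_le hm
  have hyoung := mul_sub_le_orliczConj (by rw [hconj m hm0 hm]; positivity) ht
  rw [hconj m hm0 hm] at hyoung
  linarith

lemma ConjAtPrefixSums.le_prefixSum_mul (hconj : ConjAtPrefixSums M b) (hM : IsOrlicz M)
    (hb : ∀ j, 0 < b j) (hm0 : 0 < m) (hm : m ≤ N) (ht : 0 ≤ t)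
    (h : prefixSum b m * t < m / N) : M t ≤ prefixSum b m * t :=
  hM.le_mul_of_mul_lt_orliczConj (prefixSum_pos hb hm0 (hm0.trans_le hm)) ht
    (by rwa [hconj m hm0 hm])

lemma ConjAtPrefixSums.le_self (hconj : ConjAtPrefixSums M b) (hM : IsOrlicz M)
    (hb : ∀ j, 0 < b j) (hsum : ∑ j, b j = 1) (hN : 0 < N) (ht : 0 ≤ t) (ht1 : t < 1) :
    M t ≤ t := by
  have hN' : (N : ℝ) ≠ 0 := by positivity
  simpa [prefixSum_of_le b le_rfl, hsum, hN'] using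
    hconj.le_prefixSum_mul hM hb hN le_rfl ht (by simpa [prefixSum_of_le b le_rfl, hsum, hN'])

end ConjAtPrefixSums

lemma exists_forall_le_and_not_succ {p : ℕ → Prop} {N : ℕ} (h0 : p 0) (hN : ¬ p N) :
    ∃ k < N, (∀ m ≤ k, p m) ∧ ¬ p (k + 1) := by
  classical
  have hex : ∃ m, ¬ p m := ⟨N, hN⟩
  have hpos : 0 < Nat.find hex := Nat.pos_of_ne_zero fun h => Nat.find_spec hex (h ▸ h0)
  refine ⟨Nat.find hex - 1, by have := Nat.find_min' hex hN; omega, fun m hm => ?_, ?_⟩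
  · by_contra hpm
    have := Nat.find_min' hex hpm
    omega
  · rw [Nat.sub_add_cancel hpos]
    exact Nat.find_spec hex

lemma exists_le_sum_eq {ι : Type*} [Fintype ι] (k : ι → ℕ) {T : ℕ} (hT : T ≤ ∑ i, k i) :
    ∃ ℓ ≤ k, ∑ i, ℓ i = T := by
  classical
  induction T with
  | zero => exact ⟨0, fun _ => Nat.zero_le _, by simp⟩
  | succ T ih =>
    obtain ⟨ℓ, hℓk, hℓ⟩ := ih (by omega)
    obtain ⟨i, -, hi⟩ := exists_lt_of_sum_lt (s := univ) (f := ℓ) (g := k) (by omega)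
    refine ⟨ℓ + Pi.single i 1, fun j => ?_, by simp [sum_add_distrib, hℓ]⟩
    rcases eq_or_ne j i with rfl | hj
    · simpa using hi
    · simpa [hj] using hℓk j

section Selection

variable {ι : Type*} [Fintype ι] {N : ℕ} {f : ι → ℕ → ℝ} {k : ι → ℕ}

lemma sum_le_of_forall_div_le (hN : 0 < N)
    (hsel : ∀ ℓ : ι → ℕ, ∑ i, ℓ i ≤ N → ∑ i, f i (ℓ i) ≤ 1 / 2)
    (hdown : ∀ i, ∀ m ≤ k i, (m : ℝ) / N ≤ f i m) : ∑ i, k i ≤ N := by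
  by_contra! hK
  obtain ⟨ℓ, hℓk, hℓ⟩ := exists_le_sum_eq k hK.le
  have : (1 : ℝ) ≤ 1 / 2 := calc
    (1 : ℝ) = ∑ i, (ℓ i : ℝ) / N := by
      rw [← sum_div, ← Nat.cast_sum, hℓ, div_self (by positivity)]
    _ ≤ ∑ i, f i (ℓ i) := sum_le_sum fun i _ => hdown i _ (hℓk i)
    _ ≤ 1 / 2 := hsel ℓ hℓ.le
  norm_num at this

lemma sum_succ_le_one (hcard : Fintype.card ι ≤ N)
    (hsel : ∀ ℓ : ι → ℕ, ∑ i, ℓ i ≤ N → ∑ i, f i (ℓ i) ≤ 1 / 2)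
    (hdown : ∀ i, ∀ m ≤ k i, (m : ℝ) / N ≤ f i m)
    (hup : ∀ i, f i (k i + 1) < (k i + 1 : ℕ) / N) : ∑ i, f i (k i + 1) ≤ 1 := by
  classical
  rcases isEmpty_or_nonempty ι with hι | hι
  · simp
  have hN : 0 < N := Fintype.card_pos.trans_le hcard
  set K := ∑ i, k i
  have hK : K ≤ N := sum_le_of_forall_div_le hN hsel hdown
  have hKhalf : (K : ℝ) / N ≤ 1 / 2 := calc
    (K : ℝ) / N = ∑ i, (k i : ℝ) / N := by rw [Nat.cast_sum, sum_div]
    _ ≤ ∑ i, f i (k i) := sum_le_sum fun i _ => hdown i _ le_rfl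
    _ ≤ 1 / 2 := hsel k hK
  have hstep : ∀ i, f i (k i + 1) ≤ f i (k i) + 1 / N := fun i => by
    have := hup i
    rw [Nat.cast_succ, add_div] at this
    linarith [hdown i _ le_rfl]
  -- Spend the leftover budget `N - K` raising some of the `k i` by one; since there are at most
  -- `N` indices, at most `K` of them are left unraised.
  obtain ⟨I, -, hI⟩ := exists_subset_card_eq (s := (univ : Finset ι))
    (n := min (N - K) (Fintype.card ι)) (by simp)
  have hIc : ((Iᶜ).card : ℝ) ≤ K := by
    rw [card_compl, hI]
    exact_mod_cast (by omega)
  set ℓ : ι → ℕ := fun i => k i + if i ∈ I then 1 else 0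
  have hℓ : ∑ i, ℓ i ≤ N := by
    simp only [ℓ, sum_add_distrib, sum_boole, filter_mem_eq_inter, univ_inter, Nat.cast_id, hI]
    omega
  calc ∑ i, f i (k i + 1) ≤ ∑ i, (f i (ℓ i) + if i ∈ Iᶜ then (1 / N : ℝ) else 0) := by
        refine sum_le_sum fun i _ => ?_
        by_cases hi : i ∈ I
        · simp [ℓ, hi]
        · simpa [ℓ, hi] using hstep i
    _ = ∑ i, f i (ℓ i) + (Iᶜ.card : ℝ) / N := by
        rw [sum_add_distrib, sum_ite_mem, univ_inter, sum_const, nsmul_eq_mul, mul_one_div]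
    _ ≤ 1 / 2 + (K : ℝ) / N := by gcongr; exact hsel ℓ hℓ
    _ ≤ 1 := by linarith

end Selection

section Norms

variable {ι : Type*} [Fintype ι] {N : ℕ} {a : ι → Fin N → ℝ} {M : ι → ℝ → ℝ}

lemma sum_orlicz_le_one (hcard : Fintype.card ι ≤ N) (hpos : ∀ i j, 0 < a i j)
    (hsum : ∀ i, ∑ j, a i j = 1) (hM : ∀ i, IsOrlicz (M i))
    (hconj : ∀ i, ConjAtPrefixSums (M i) (a i)) {y : ι → ℝ} (hy : ∀ i, 0 ≤ y i)
    (hsel : ∀ ℓ : ι → ℕ, ∑ i, ℓ i ≤ N → ∑ i, prefixSum (a i) (ℓ i) * y i ≤ 1 / 2) :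
    ∑ i, M i (y i) ≤ 1 := by
  classical
  have hthreshold : ∀ i, ∃ k < N, (∀ m ≤ k, (m : ℝ) / N ≤ prefixSum (a i) m * y i) ∧
      ¬ ((k + 1 : ℕ) : ℝ) / N ≤ prefixSum (a i) (k + 1) * y i := by
    intro i
    have hN : 0 < N := (Fintype.card_pos_iff.2 ⟨i⟩).trans_le hcard
    set δ : ι → ℕ := Pi.single i N
    have hyi : y i ≤ 1 / 2 := calc
      y i = prefixSum (a i) (δ i) * y i := by simp [δ, prefixSum_of_le, hsum]
      _ ≤ ∑ j, prefixSum (a j) (δ j) * y j :=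
        single_le_sum (f := fun j => prefixSum (a j) (δ j) * y j)
          (fun j _ => mul_nonneg (prefixSum_nonneg (fun l => (hpos j l).le) _) (hy j))
          (mem_univ i)
      _ ≤ 1 / 2 := hsel δ (by simp [δ])
    refine exists_forall_le_and_not_succ (by simp) ?_
    rw [prefixSum_of_le _ le_rfl, hsum i, div_self (by positivity)]
    linarith
  choose k hkN hdown hup using hthreshold
  calc ∑ i, M i (y i) ≤ ∑ i, prefixSum (a i) (k i + 1) * y i :=
        sum_le_sum fun i _ => (hconj i).le_prefixSum_mul (hM i) (hpos i) (k i).succ_pos (hkN i)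
          (hy i) (lt_of_not_ge (hup i))
    _ ≤ 1 := sum_succ_le_one hcard hsel hdown fun i => lt_of_not_ge (hup i)

end Norms

lemma ConjAtPrefixSums.of_forall_fin {N : ℕ} {M : ℝ → ℝ} {b : Fin N → ℝ}
    (h : ∀ m : Fin N, orliczConj M (∑ j : Fin N, if j ≤ m then b j else 0) = ((m : ℕ) + 1) / N) :
    ConjAtPrefixSums M b := by
  intro m hm0 hm
  obtain ⟨m, rfl⟩ := Nat.exists_eq_succ_of_ne_zero hm0.ne'
  simpa [sum_ite_le_eq_prefixSum] using h ⟨m, hm⟩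

section PrefixNorm

variable {ι : Type*} [Fintype ι] {N : ℕ} {a : ι → Fin N → ℝ}

noncomputable def prefixNorm (a : ι → Fin N → ℝ) (x : ι → ℝ) : ℝ :=
  sSup {v : ℝ | ∃ ℓ : ι → ℕ, ∑ i, ℓ i ≤ N ∧ v = ∑ i, prefixSum (a i) (ℓ i) * |x i|}

lemma sum_le_prefixNorm (hpos : ∀ i j, 0 < a i j) (hsum : ∀ i, ∑ j, a i j = 1) (x : ι → ℝ)
    {ℓ : ι → ℕ} (hℓ : ∑ i, ℓ i ≤ N) : ∑ i, prefixSum (a i) (ℓ i) * |x i| ≤ prefixNorm a x := by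
  refine le_csSup ⟨∑ i, |x i|, ?_⟩ ⟨ℓ, hℓ, rfl⟩
  rintro _ ⟨ℓ', -, rfl⟩
  refine sum_le_sum fun i _ => mul_le_of_le_one_left (abs_nonneg _) ?_
  exact (prefixSum_le_sum (fun j => (hpos i j).le) _).trans (hsum i).le

lemma prefixNorm_le {x : ι → ℝ} {c : ℝ}
    (h : ∀ ℓ : ι → ℕ, ∑ i, ℓ i ≤ N → ∑ i, prefixSum (a i) (ℓ i) * |x i| ≤ c) :
    prefixNorm a x ≤ c :=
  csSup_le ⟨_, 0, by simp, rfl⟩ fun _ ⟨ℓ, hℓ, hv⟩ => hv ▸ h ℓ hℓ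

lemma prefixNorm_le_two_mul {M : ι → ℝ → ℝ} (hM : ∀ i, IsOrlicz (M i))
    (hconj : ∀ i, ConjAtPrefixSums (M i) (a i)) {x : ι → ℝ} {ρ : ℝ} (hρ : 0 < ρ)
    (h : ∑ i, M i (|x i| / ρ) ≤ 1) : prefixNorm a x ≤ 2 * ρ := by
  refine prefixNorm_le fun ℓ hℓ => ?_
  have hℓN : ∀ i, ℓ i ≤ N := fun i =>
    (single_le_sum (fun j _ => Nat.zero_le (ℓ j)) (mem_univ i)).trans hℓ
  calc ∑ i, prefixSum (a i) (ℓ i) * |x i| = ρ * ∑ i, prefixSum (a i) (ℓ i) * (|x i| / ρ) := by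
        rw [mul_sum]
        exact sum_congr rfl fun i _ => by field_simp
    _ ≤ ρ * ∑ i, (M i (|x i| / ρ) + ℓ i / N) := by
        gcongr with i
        exact (hconj i).prefixSum_mul_le (hM i) (hℓN i) (by positivity)
    _ = ρ * (∑ i, M i (|x i| / ρ) + ((∑ i, ℓ i : ℕ) : ℝ) / N) := by
        rw [sum_add_distrib, Nat.cast_sum, sum_div]
    _ ≤ ρ * (1 + 1) := by
        gcongr
        exact div_le_one_of_le₀ (by exact_mod_cast hℓ) (Nat.cast_nonneg N)
    _ = 2 * ρ := by ring

end PrefixNorm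

section MusielakNorm

variable {n : ℕ} {M : Fin n → ℝ → ℝ} {x : Fin n → ℝ}

lemma musielakNorm_le {ρ : ℝ} (hρ : 0 < ρ) (h : ∑ i, M i (|x i| / ρ) ≤ 1) :
    musielakNorm M x ≤ ρ :=
  csInf_le ⟨0, fun _ hρ => hρ.1.le⟩ ⟨hρ, h⟩

lemma le_musielakNorm {c : ℝ} (hne : ∃ ρ, 0 < ρ ∧ ∑ i, M i (|x i| / ρ) ≤ 1)
    (h : ∀ ρ, 0 < ρ → ∑ i, M i (|x i| / ρ) ≤ 1 → c ≤ ρ) : c ≤ musielakNorm M x :=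
  le_csInf hne fun ρ hρ => h ρ hρ.1 hρ.2

lemma exists_sum_div_le_one (hle : ∀ i t, 0 ≤ t → t < 1 → M i t ≤ t) (x : Fin n → ℝ) :
    ∃ ρ, 0 < ρ ∧ ∑ i, M i (|x i| / ρ) ≤ 1 := by
  set ρ := ∑ i, |x i| + 1
  have hρ : 0 < ρ := by positivity
  refine ⟨ρ, hρ, ?_⟩
  calc ∑ i, M i (|x i| / ρ) ≤ ∑ i, |x i| / ρ := by
        refine sum_le_sum fun i _ => hle i _ (by positivity) ?_
        rw [div_lt_one hρ]
        linarith [single_le_sum (fun j _ => abs_nonneg (x j)) (mem_univ i)]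
    _ ≤ 1 := by
        rw [← sum_div, div_le_one hρ]
        linarith

variable {N : ℕ} {a : Fin n → Fin N → ℝ}

lemma half_prefixNorm_le_musielakNorm (hnN : n ≤ N) (hpos : ∀ i j, 0 < a i j)
    (hsum : ∀ i, ∑ j, a i j = 1) (hM : ∀ i, IsOrlicz (M i))
    (hconj : ∀ i, ConjAtPrefixSums (M i) (a i)) (x : Fin n → ℝ) :
    1 / 2 * prefixNorm a x ≤ musielakNorm M x := by
  refine le_musielakNorm (exists_sum_div_le_one (fun i t ht ht1 => ?_) x) fun ρ hρ h => ?_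
  · exact (hconj i).le_self (hM i) (hpos i) (hsum i) (i.pos.trans_le hnN) ht ht1
  · linarith [prefixNorm_le_two_mul hM hconj hρ h]

lemma musielakNorm_le_two_mul_prefixNorm (hnN : n ≤ N) (hpos : ∀ i j, 0 < a i j)
    (hsum : ∀ i, ∑ j, a i j = 1) (hM : ∀ i, IsOrlicz (M i))
    (hconj : ∀ i, ConjAtPrefixSums (M i) (a i)) (x : Fin n → ℝ) :
    musielakNorm M x ≤ 2 * prefixNorm a x := by
  refine le_of_forall_gt_imp_ge_of_dense fun ρ hρ => ?_
  have hS : 0 ≤ prefixNorm a x := by simpa using sum_le_prefixNorm hpos hsum x (ℓ := 0) (by simp)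
  have hρ0 : 0 < ρ := by linarith
  refine musielakNorm_le hρ0 <| sum_orlicz_le_one (by simpa using hnN) hpos hsum hM hconj
    (fun i => by positivity) fun ℓ hℓ => ?_
  calc ∑ i, prefixSum (a i) (ℓ i) * (|x i| / ρ) = (∑ i, prefixSum (a i) (ℓ i) * |x i|) / ρ := by
        rw [sum_div]
        exact sum_congr rfl fun i _ => by ring
    _ ≤ prefixNorm a x / ρ := by gcongr; exact sum_le_prefixNorm hpos hsum x hℓ
    _ ≤ 1 / 2 := by
        rw [div_le_iff₀ hρ0]
        linarith

end MusielakNorm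

theorem approx_musielakNorm_general (n N : ℕ) (hnN : n ≤ N)
    (a : Fin n → Fin N → ℝ) (M : Fin n → ℝ → ℝ)
    (hpos : ∀ i j, 0 < a i j)
    (hsum : ∀ i, ∑ j, a i j = 1)
    (hM : ∀ i, IsOrlicz (M i))
    (hval : ∀ i (m : Fin N),
      orliczConj (M i) (∑ j : Fin N, if j ≤ m then a i j else 0) = ((m : ℕ) + 1) / N)
    (x : Fin n → ℝ) :
    (1 / 2) * sSup {v : ℝ | ∃ ℓ : Fin n → ℕ, ∑ i, ℓ i ≤ N ∧
        v = ∑ i, (∑ j : Fin N, if (j : ℕ) < ℓ i then a i j else 0) * |x i|}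
      ≤ musielakNorm M x ∧
    musielakNorm M x ≤
      2 * sSup {v : ℝ | ∃ ℓ : Fin n → ℕ, ∑ i, ℓ i ≤ N ∧
        v = ∑ i, (∑ j : Fin N, if (j : ℕ) < ℓ i then a i j else 0) * |x i|} := by
  have hconj : ∀ i, ConjAtPrefixSums (M i) (a i) := fun i =>
    .of_forall_fin (hval i)
  exact ⟨half_prefixNorm_le_musielakNorm hnN hpos hsum hM hconj x,
    musielakNorm_le_two_mul_prefixNorm hnN hpos hsum hM hconj x⟩

/-- Approximation of Musielak–Orlicz norms: the norm `‖x‖_a` given by maximizing over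
partial-sum selections is 2-equivalent to the Musielak–Orlicz norm `‖x‖_{Σ M_i}` when
`M_i*(∑_{j=1}^m a_{ij}) = m/N`. -/
theorem approx_musielakNorm (n N : ℕ) (hnN : n ≤ N)
    (a : Fin n → Fin N → ℝ) (M : Fin n → ℝ → ℝ)
    (hdec : ∀ i, ∀ j k : Fin N, j ≤ k → a i k ≤ a i j)
    (hpos : ∀ i j, 0 < a i j)
    (hsum : ∀ i, ∑ j, a i j = 1)
    (hM : ∀ i, IsOrlicz (M i))
    (hval : ∀ i (m : Fin N),
      orliczConj (M i) (∑ j : Fin N, if j ≤ m then a i j else 0) = ((m : ℕ) + 1) / N)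
    (x : Fin n → ℝ) :
    (1 / 2) * sSup {v : ℝ | ∃ ℓ : Fin n → ℕ, ∑ i, ℓ i ≤ N ∧
        v = ∑ i, (∑ j : Fin N, if (j : ℕ) < ℓ i then a i j else 0) * |x i|}
      ≤ musielakNorm M x ∧
    musielakNorm M x ≤
      2 * sSup {v : ℝ | ∃ ℓ : Fin n → ℕ, ∑ i, ℓ i ≤ N ∧
        v = ∑ i, (∑ j : Fin N, if (j : ℕ) < ℓ i then a i j else 0) * |x i|} :=
  approx_musielakNorm_general n N hnN a M hpos hsum hM hval x
end Orlicz
end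

section
/- Let n ≤ N and a ∈ ℝ^{n×N} with decreasing positive rows. Then ‖x‖_a = max{∑_{i=1}^n (∑_{j=1}^{ℓ_i} a_{ij})|x_i| : ℓ_i ∈ {0,...,N}, ∑_i ℓ_i ≤ N} defines a norm on ℝⁿ, and its dual unit ball equals the convex hull of the vectors (ε_i ∑_{j=1}^{k_i} a_{ij})_{i=1}^n over all choices ∑_i k_i ≤ N, ε_i = ±1. -/
/-!
Write `S_k(i) = a i 0 + ⋯ + a i (k-1)` (`partialSum a i k`) and let `V` be the finite set of
vectors `(εᵢ S_{kᵢ}(i))ᵢ` with `∑ kᵢ ≤ N`, `εᵢ = ±1`. Taking `εᵢ` to be the sign of `xᵢ` shows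
`‖x‖_a = max_{v ∈ V} ⟨v, x⟩`, so the unit ball of `‖·‖_a` is the polar of `V` and the dual ball is
the bipolar of `V`. For a finite `V` with `0 ∈ convexHull V` the bipolar is `convexHull V`: a point
outside this compact convex set is strictly separated from it by a functional which, rescaled,
lies in the polar of `V`. The norm axioms hold for any maximum of weighted `ℓ¹`-sums with
nonnegative weights; definiteness comes from the weight `a i 0 > 0` that `ℓ = eᵢ` puts on `|xᵢ|`.
-/

open Finset

open scoped Pointwise

section Polar

variable {ι : Type*} [Fintype ι]

/-- The one-sided polar: Mathlib's `LinearMap.polar` bounds `‖⟪v, x⟫‖` instead of `⟪v, x⟫`. -/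
def dotPolar (S : Set (ι → ℝ)) : Set (ι → ℝ) :=
  {x | ∀ v ∈ S, v ⬝ᵥ x ≤ 1}

theorem convex_dotPolar (S : Set (ι → ℝ)) : Convex ℝ (dotPolar S) := by
  intro x hx y hy s t hs ht hst v hv
  rw [dotProduct_add, dotProduct_smul, dotProduct_smul, smul_eq_mul, smul_eq_mul]
  nlinarith [hx v hv, hy v hv]

theorem subset_dotPolar_dotPolar (S : Set (ι → ℝ)) : S ⊆ dotPolar (dotPolar S) :=
  fun v hv _ hx => dotProduct_comm _ v ▸ hx v hv

theorem dotPolar_dotPolar_eq_convexHull {V : Set (ι → ℝ)} (hV : V.Finite)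
    (h0 : (0 : ι → ℝ) ∈ convexHull ℝ V) : dotPolar (dotPolar V) = convexHull ℝ V := by
  classical
  refine subset_antisymm (fun w hw => ?_)
    (convexHull_min (subset_dotPolar_dotPolar V) (convex_dotPolar _))
  by_contra hwV
  obtain ⟨f, u, hfV, hfw⟩ := geometric_hahn_banach_closed_point (convex_convexHull ℝ V)
    (hV.isCompact_convexHull (𝕜 := ℝ)).isClosed hwV
  have hu : 0 < u := by simpa using hfV 0 h0
  set y : ι → ℝ := fun i => f (fun j => if i = j then 1 else 0) / u
  have hfy : ∀ v, v ⬝ᵥ y = f v / u := fun v => by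
    have hf := f.toLinearMap.pi_apply_eq_sum_univ v
    rw [ContinuousLinearMap.coe_coe] at hf
    rw [hf, Finset.sum_div]
    simp only [dotProduct, y, smul_eq_mul, mul_div_assoc]
  have hy : y ∈ dotPolar V := fun v hv => by
    rw [hfy, div_le_one hu]
    exact (hfV v (subset_convexHull ℝ V hv)).le
  have := hw y hy
  rw [dotProduct_comm, hfy, div_le_one hu] at this
  linarith

end Polar

section NormA

variable {ι : Type*} {N : ℕ} (a : ι → Fin N → ℝ)

noncomputable def partialSum (i : ι) (m : ℕ) : ℝ :=
  ∑ j : Fin N, if (j : ℕ) < m then a i j else 0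

variable {a} in
theorem partialSum_nonneg (ha : ∀ i j, 0 ≤ a i j) (i : ι) (m : ℕ) : 0 ≤ partialSum a i m :=
  Finset.sum_nonneg fun j _ => by split_ifs <;> simp [ha i j]

variable {a} in
theorem partialSum_one (hN : 0 < N) (i : ι) : partialSum a i 1 = a i ⟨0, hN⟩ := by
  rw [partialSum, Finset.sum_eq_single ⟨0, hN⟩
    (fun j _ hj => if_neg fun h => hj (Fin.ext (Nat.lt_one_iff.1 h))) (by simp)]
  simp

variable [Fintype ι]

def normASet (x : ι → ℝ) : Set ℝ :=
  {s | ∃ ℓ : ι → ℕ, ∑ i, ℓ i ≤ N ∧ s = ∑ i, partialSum a i (ℓ i) * |x i|}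

noncomputable def normA (x : ι → ℝ) : ℝ :=
  sSup (normASet a x)

def dualVertices : Set (ι → ℝ) :=
  {v | ∃ (k : ι → ℕ) (ε : ι → ℝ), (∑ i, k i ≤ N) ∧ (∀ i, ε i = 1 ∨ ε i = -1) ∧
    v = fun i => ε i * partialSum a i (k i)}

theorem finite_setOf_sum_le (m : ℕ) : {ℓ : ι → ℕ | ∑ i, ℓ i ≤ m}.Finite :=
  (Set.Finite.pi fun _ => Set.finite_Iic m).subset fun ℓ hℓ i _ =>
    (Finset.single_le_sum (fun i _ => Nat.zero_le (ℓ i)) (Finset.mem_univ i)).trans hℓ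

theorem finite_normASet (x : ι → ℝ) : (normASet a x).Finite :=
  ((finite_setOf_sum_le N).image fun ℓ => ∑ i, partialSum a i (ℓ i) * |x i|).subset
    fun _ ⟨ℓ, hℓ, hs⟩ => ⟨ℓ, hℓ, hs.symm⟩

theorem finite_dualVertices : (dualVertices a).Finite := by
  have hsigns : {ε : ι → ℝ | ∀ i, ε i = 1 ∨ ε i = -1}.Finite :=
    (Set.Finite.pi fun _ => (Set.finite_singleton 1).insert (-1)).subset
      fun ε hε i _ => (hε i).symm.imp id id
  refine ((finite_setOf_sum_le N).image2 (fun k ε i => ε i * partialSum a i (k i)) hsigns).subset ?_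
  rintro _ ⟨k, ε, hk, hε, rfl⟩
  exact ⟨k, hk, ε, hε, rfl⟩

theorem zero_mem_normASet (x : ι → ℝ) : (0 : ℝ) ∈ normASet a x :=
  ⟨0, by simp, by simp [partialSum]⟩

theorem zero_mem_dualVertices : (0 : ι → ℝ) ∈ dualVertices a :=
  ⟨0, 1, by simp, fun _ => Or.inl rfl, by ext; simp [partialSum]⟩

theorem le_normA {x : ι → ℝ} {s : ℝ} (hs : s ∈ normASet a x) : s ≤ normA a x :=
  le_csSup (finite_normASet a x).bddAbove hs

theorem normA_le {x : ι → ℝ} {B : ℝ} (h : ∀ s ∈ normASet a x, s ≤ B) : normA a x ≤ B :=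
  csSup_le ⟨0, zero_mem_normASet a x⟩ h

theorem normA_nonneg (x : ι → ℝ) : 0 ≤ normA a x :=
  le_normA a (zero_mem_normASet a x)

theorem normASet_smul (c : ℝ) (x : ι → ℝ) : normASet a (c • x) = |c| • normASet a x := by
  have key : ∀ ℓ : ι → ℕ, ∑ i, partialSum a i (ℓ i) * |(c • x) i| =
      |c| • ∑ i, partialSum a i (ℓ i) * |x i| := fun ℓ => by
    simp only [Pi.smul_apply, smul_eq_mul, abs_mul, Finset.mul_sum]
    exact Finset.sum_congr rfl fun _ _ => by ring
  ext s
  simp only [normASet, Set.mem_smul_set, Set.mem_ofPred_eq, key]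
  constructor
  · rintro ⟨ℓ, hℓ, rfl⟩
    exact ⟨_, ⟨ℓ, hℓ, rfl⟩, rfl⟩
  · rintro ⟨_, ⟨ℓ, hℓ, rfl⟩, rfl⟩
    exact ⟨ℓ, hℓ, rfl⟩

theorem normA_smul (c : ℝ) (x : ι → ℝ) : normA a (c • x) = |c| * normA a x := by
  rw [normA, normASet_smul, Real.sSup_smul_of_nonneg (abs_nonneg c), smul_eq_mul, normA]

theorem normA_add_le (ha : ∀ i j, 0 ≤ a i j) (x z : ι → ℝ) :
    normA a (x + z) ≤ normA a x + normA a z := by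
  refine normA_le a ?_
  rintro _ ⟨ℓ, hℓ, rfl⟩
  calc ∑ i, partialSum a i (ℓ i) * |(x + z) i|
      ≤ ∑ i, partialSum a i (ℓ i) * |x i| + ∑ i, partialSum a i (ℓ i) * |z i| := by
        rw [← Finset.sum_add_distrib]
        refine Finset.sum_le_sum fun i _ => ?_
        rw [← mul_add]
        exact mul_le_mul_of_nonneg_left (abs_add_le _ _) (partialSum_nonneg ha i _)
    _ ≤ normA a x + normA a z := add_le_add (le_normA a ⟨ℓ, hℓ, rfl⟩) (le_normA a ⟨ℓ, hℓ, rfl⟩)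

variable {a}

theorem mul_abs_le_normA (hN : 0 < N) (x : ι → ℝ) (i : ι) :
    a i ⟨0, hN⟩ * |x i| ≤ normA a x := by
  classical
  rw [← partialSum_one (a := a) hN]
  refine le_normA a ⟨Pi.single i 1, by simp; omega, ?_⟩
  rw [Finset.sum_eq_single i (fun j _ hj => by simp [hj, partialSum]) (by simp)]
  simp

theorem normA_eq_zero_iff (hpos : ∀ i j, 0 < a i j) (hcard : Fintype.card ι ≤ N) {x : ι → ℝ} :
    normA a x = 0 ↔ x = 0 := by
  refine ⟨fun h => funext fun i => ?_, fun h => ?_⟩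
  · have hN : 0 < N := (Fintype.card_pos_iff.2 ⟨i⟩).trans_le hcard
    have hxi := h ▸ mul_abs_le_normA hN x i
    exact abs_nonpos_iff.1 (nonpos_of_mul_nonpos_right hxi (hpos i _))
  · simpa [h] using normA_smul a 0 x

theorem dotProduct_le_normA (ha : ∀ i j, 0 ≤ a i j) {v : ι → ℝ} (hv : v ∈ dualVertices a)
    (x : ι → ℝ) : v ⬝ᵥ x ≤ normA a x := by
  obtain ⟨k, ε, hk, hε, rfl⟩ := hv
  refine le_trans (Finset.sum_le_sum fun i _ => ?_) (le_normA a ⟨k, hk, rfl⟩)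
  have hεx : ε i * x i ≤ |x i| := by
    rcases hε i with h | h <;> simp [h, le_abs_self, neg_le_abs]
  calc ε i * partialSum a i (k i) * x i = (ε i * x i) * partialSum a i (k i) := by ring
    _ ≤ |x i| * partialSum a i (k i) :=
      mul_le_mul_of_nonneg_right hεx (partialSum_nonneg ha i _)
    _ = partialSum a i (k i) * |x i| := mul_comm _ _

theorem exists_mem_dualVertices_dotProduct_eq {x : ι → ℝ} {s : ℝ} (hs : s ∈ normASet a x) :
    ∃ v ∈ dualVertices a, v ⬝ᵥ x = s := by
  obtain ⟨ℓ, hℓ, rfl⟩ := hs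
  set ε : ι → ℝ := fun i => if 0 ≤ x i then 1 else -1
  refine ⟨_, ⟨ℓ, ε, hℓ, fun i => by by_cases h : 0 ≤ x i <;> simp [ε, h], rfl⟩,
    Finset.sum_congr rfl fun i _ => ?_⟩
  by_cases h : 0 ≤ x i
  · simp [ε, h, abs_of_nonneg h, mul_comm]
  · simp [ε, h, abs_of_neg (not_le.1 h), mul_comm]

theorem normA_le_iff (ha : ∀ i j, 0 ≤ a i j) {x : ι → ℝ} {B : ℝ} :
    normA a x ≤ B ↔ ∀ v ∈ dualVertices a, v ⬝ᵥ x ≤ B := by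
  refine ⟨fun h v hv => (dotProduct_le_normA ha hv x).trans h, fun h => normA_le a ?_⟩
  intro s hs
  obtain ⟨v, hv, rfl⟩ := exists_mem_dualVertices_dotProduct_eq hs
  exact h v hv

theorem setOf_normA_le_one_eq_dotPolar (ha : ∀ i j, 0 ≤ a i j) :
    {x | normA a x ≤ 1} = dotPolar (dualVertices a) :=
  Set.ext fun _ => normA_le_iff ha

end NormA

theorem norm_a_and_dual_ball_general (n N : ℕ) (hnN : n ≤ N)
    (a : Fin n → Fin N → ℝ)
    (hpos : ∀ i j, 0 < a i j)
    (Na : (Fin n → ℝ) → ℝ)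
    (hNa : ∀ x, Na x = sSup {v : ℝ | ∃ ℓ : Fin n → ℕ, ∑ i, ℓ i ≤ N ∧
        v = ∑ i, (∑ j : Fin N, if (j : ℕ) < ℓ i then a i j else 0) * |x i|}) :
    (∀ x, 0 ≤ Na x) ∧
    (∀ x, Na x = 0 ↔ x = 0) ∧
    (∀ (c : ℝ) (x), Na (c • x) = |c| * Na x) ∧
    (∀ x z, Na (x + z) ≤ Na x + Na z) ∧
    {w : Fin n → ℝ | ∀ x, Na x ≤ 1 → ∑ i, x i * w i ≤ 1}
      = convexHull ℝ {v : Fin n → ℝ | ∃ (k : Fin n → ℕ) (ε : Fin n → ℝ),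
          (∑ i, k i ≤ N) ∧ (∀ i, ε i = 1 ∨ ε i = -1) ∧
          v = fun i => ε i * ∑ j : Fin N, if (j : ℕ) < k i then a i j else 0} := by
  obtain rfl : Na = normA a := funext hNa
  have ha : ∀ i j, 0 ≤ a i j := fun i j => (hpos i j).le
  refine ⟨normA_nonneg a, fun x => normA_eq_zero_iff hpos (by simpa using hnN), normA_smul a,
    normA_add_le a ha, ?_⟩
  calc {w | ∀ x, normA a x ≤ 1 → ∑ i, x i * w i ≤ 1}
      = dotPolar {x | normA a x ≤ 1} := rfl
    _ = dotPolar (dotPolar (dualVertices a)) := by rw [setOf_normA_le_one_eq_dotPolar ha]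
    _ = convexHull ℝ (dualVertices a) := dotPolar_dotPolar_eq_convexHull
      (finite_dualVertices a) (subset_convexHull ℝ _ (zero_mem_dualVertices a))

/-- `‖·‖_a` is a norm on `ℝⁿ` and its dual unit ball is the convex hull of the signed
partial-sum vectors of the matrix `a`. -/
theorem norm_a_and_dual_ball (n N : ℕ) (hnN : n ≤ N)
    (a : Fin n → Fin N → ℝ)
    (hdec : ∀ i, ∀ j k : Fin N, j ≤ k → a i k ≤ a i j)
    (hpos : ∀ i j, 0 < a i j)
    (Na : (Fin n → ℝ) → ℝ)
    (hNa : ∀ x, Na x = sSup {v : ℝ | ∃ ℓ : Fin n → ℕ, ∑ i, ℓ i ≤ N ∧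
        v = ∑ i, (∑ j : Fin N, if (j : ℕ) < ℓ i then a i j else 0) * |x i|}) :
    (∀ x, 0 ≤ Na x) ∧
    (∀ x, Na x = 0 ↔ x = 0) ∧
    (∀ (c : ℝ) (x), Na (c • x) = |c| * Na x) ∧
    (∀ x z, Na (x + z) ≤ Na x + Na z) ∧
    {w : Fin n → ℝ | ∀ x, Na x ≤ 1 → ∑ i, x i * w i ≤ 1}
      = convexHull ℝ {v : Fin n → ℝ | ∃ (k : Fin n → ℕ) (ε : Fin n → ℝ),
          (∑ i, k i ≤ N) ∧ (∀ i, ε i = 1 ∨ ε i = -1) ∧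
          v = fun i => ε i * ∑ j : Fin N, if (j : ℕ) < k i then a i j else 0} :=
  norm_a_and_dual_ball_general n N hnN a hpos Na hNa
end

section
/- Let y = (y_{ij}) ∈ ℝ^{n×n} with y_{i1} ≥ ... ≥ y_{in} > 0 for each i. For x ∈ ℝⁿ with x_i ≥ 0, the sum of the n largest entries of the n² numbers x_i y_{ij} equals max{∑_{i=1}^n x_i ∑_{j=1}^{ℓ_i} y_{ij} : ℓ_i ∈ {0,...,n}, ∑_{i=1}^n ℓ_i = n}. -/
open Finset

lemma strictMono_le_val {m N : ℕ} {f : Fin m → Fin N} (hf : StrictMono f) (i : Fin m) :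
    (i : ℕ) ≤ (f i : ℕ) := by
  obtain ⟨i, hi⟩ := i
  induction i with
  | zero => simp
  | succ k ih =>
    have hk : k < m := Nat.lt_of_succ_lt hi
    have h1 := ih hk
    have h2 : f ⟨k, hk⟩ < f ⟨k + 1, hi⟩ := hf (by simp [Fin.lt_def])
    rw [Fin.lt_def] at h2
    simp only [Fin.val_mk] at h1 h2 ⊢
    omega

lemma sum_finset_emb {N m : ℕ} (T : Finset (Fin N)) (hT : T.card = m) (f : Fin N → ℝ) :
    ∑ k ∈ T, f k = ∑ i : Fin m, f (T.orderEmbOfFin hT i) := by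
  have himg : Finset.image (T.orderEmbOfFin hT) univ = T := by
    apply Finset.eq_of_subset_of_card_le
    · intro k hk
      simp only [Finset.mem_image] at hk
      obtain ⟨i, _, rfl⟩ := hk
      exact Finset.orderEmbOfFin_mem _ _ _
    · rw [hT, Finset.card_image_of_injective _ (T.orderEmbOfFin hT).injective, Finset.card_univ,
        Fintype.card_fin]
  rw [show (∑ i : Fin m, f (T.orderEmbOfFin hT i))
      = ∑ k ∈ Finset.image (T.orderEmbOfFin hT) univ, f k from
    (Finset.sum_image (fun a _ b _ h => (T.orderEmbOfFin hT).injective h)).symm, himg]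

lemma card_filter_lt (N m : ℕ) (hm : m ≤ N) :
    (univ.filter fun j : Fin N => (j : ℕ) < m).card = m := by
  rw [Finset.card_filter, Fin.sum_univ_eq_sum_range (fun j => if j < m then 1 else 0),
    ← Finset.sum_filter]
  have : (Finset.range N).filter (· < m) = Finset.range m := by ext a; simp; omega
  rw [this, Finset.sum_const, smul_eq_mul, mul_one, Finset.card_range]

lemma sum_ite_lt {N m : ℕ} (hm : m ≤ N) (f : Fin N → ℝ) :
    ∑ j : Fin N, (if (j : ℕ) < m then f j else 0) = ∑ i : Fin m, f (Fin.castLE hm i) := by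
  have hc := card_filter_lt N m hm
  rw [← Finset.sum_filter, sum_finset_emb _ hc]
  have hemb : (fun i : Fin m => Fin.castLE hm i)
      = (univ.filter fun j : Fin N => (j : ℕ) < m).orderEmbOfFin hc := by
    apply Finset.orderEmbOfFin_unique
    · intro i
      simp only [Finset.mem_filter, Finset.mem_univ, true_and, Fin.coe_castLE]
      exact i.2
    · intro a b h
      rw [Fin.lt_def] at h ⊢
      simpa only [Fin.coe_castLE] using h
  rw [← hemb]

lemma sum_subset_le_initial {N : ℕ} (f : Fin N → ℝ) (hf : ∀ a b : Fin N, a ≤ b → f b ≤ f a)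
    (T : Finset (Fin N)) (hTc : T.card ≤ N) :
    ∑ k ∈ T, f k ≤ ∑ j : Fin N, (if (j : ℕ) < T.card then f j else 0) := by
  rw [sum_finset_emb T rfl, sum_ite_lt hTc]
  apply Finset.sum_le_sum
  intro i _
  apply hf
  rw [Fin.le_def]
  exact strictMono_le_val (T.orderEmbOfFin rfl).strictMono i

/-- The sum of the `n` largest of the `n²` products `x_i y_{ij}` (rows of `y` decreasing)
equals the maximum of `∑_i x_i ∑_{j=1}^{ℓ_i} y_{ij}` over selections with `∑ ℓ_i = n`. -/
theorem sum_n_largest_eq_max (n : ℕ) (hn : 0 < n)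
    (y : Fin n → Fin n → ℝ) (x : Fin n → ℝ)
    (hdec : ∀ i, ∀ j k : Fin n, j ≤ k → y i k ≤ y i j)
    (hpos : ∀ i j, 0 < y i j)
    (hx : ∀ i, 0 ≤ x i)
    (s : Fin (n * n) → ℝ) (e : Fin (n * n) ≃ Fin n × Fin n)
    (hs_anti : ∀ k l : Fin (n * n), k ≤ l → s l ≤ s k)
    (hs_val : ∀ k : Fin (n * n), s k = x (e k).1 * y (e k).1 (e k).2) :
    ∑ k : Fin n, s ⟨k.1, lt_of_lt_of_le k.2 (Nat.le_mul_of_pos_left n hn)⟩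
      = sSup {v : ℝ | ∃ ℓ : Fin n → ℕ, (∀ i, ℓ i ≤ n) ∧ ∑ i, ℓ i = n ∧
          v = ∑ i, x i * ∑ j : Fin n, if (j : ℕ) < ℓ i then y i j else 0} := by
  have hnn : n ≤ n * n := Nat.le_mul_of_pos_left n hn
  set S : Set ℝ := {v : ℝ | ∃ ℓ : Fin n → ℕ, (∀ i, ℓ i ≤ n) ∧ ∑ i, ℓ i = n ∧
      v = ∑ i, x i * ∑ j : Fin n, if (j : ℕ) < ℓ i then y i j else 0} with hS
  -- Every element of S is at most the sum of the n largest entries.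
  have key_ub : ∀ v ∈ S, v ≤ ∑ i : Fin n, s (Fin.castLE hnn i) := by
    rintro v ⟨ℓ, hℓ, hsum, rfl⟩
    set Q : Finset (Fin n × Fin n) :=
      univ.filter (fun p : Fin n × Fin n => (p.2 : ℕ) < ℓ p.1) with hQ
    set T : Finset (Fin (n * n)) := Q.image e.symm with hTdef
    have hQcard : Q.card = n := by
      rw [hQ, Finset.card_filter, ← Finset.univ_product_univ, Finset.sum_product]
      have h1 : ∀ i : Fin n,
          (∑ j : Fin n, if (((i, j) : Fin n × Fin n).2 : ℕ) < ℓ ((i, j) : Fin n × Fin n).1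
            then 1 else 0) = ℓ i := by
        intro i
        rw [← Finset.card_filter]
        exact card_filter_lt n (ℓ i) (hℓ i)
      rw [Finset.sum_congr rfl fun i _ => h1 i, hsum]
    have hTcard : T.card = n := by
      rw [hTdef, Finset.card_image_of_injective _ e.symm.injective, hQcard]
    have hveq : (∑ i, x i * ∑ j : Fin n, if (j : ℕ) < ℓ i then y i j else 0)
        = ∑ k ∈ T, s k := by
      rw [hTdef, Finset.sum_image (fun a _ b _ h => e.symm.injective h)]
      have h1 : ∀ p ∈ Q, s (e.symm p) = x p.1 * y p.1 p.2 := by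
        intro p _
        rw [hs_val]
        simp
      rw [Finset.sum_congr rfl h1, hQ, Finset.sum_filter, ← Finset.univ_product_univ,
        Finset.sum_product]
      refine Finset.sum_congr rfl fun i _ => ?_
      rw [Finset.mul_sum]
      refine Finset.sum_congr rfl fun j _ => ?_
      by_cases h : (j : ℕ) < ℓ i <;> simp [h]
    rw [hveq]
    have hb := sum_subset_le_initial s (fun a b h => hs_anti a b h) T (hTcard.le.trans hnn)
    rw [hTcard, sum_ite_lt hnn] at hb
    exact hb
  -- The sum of the n largest entries is attained by some element of S.
  have key_mem : ∃ v ∈ S, (∑ i : Fin n, s (Fin.castLE hnn i)) ≤ v := by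
    set T₀ : Finset (Fin (n * n)) := univ.filter (fun k : Fin (n * n) => (k : ℕ) < n) with hT0
    have hT0card : T₀.card = n := card_filter_lt _ _ hnn
    set Q₀ : Finset (Fin n × Fin n) := T₀.image e with hQ0
    set C : Fin n → Finset (Fin n) :=
      fun i => (Q₀.filter (fun p => p.1 = i)).image Prod.snd with hC
    have hinj : ∀ i : Fin n, ∀ p ∈ Q₀.filter (fun p : Fin n × Fin n => p.1 = i),
        ∀ q ∈ Q₀.filter (fun p : Fin n × Fin n => p.1 = i), p.2 = q.2 → p = q := by
      intro i p hp q hq h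
      have hp1 := (Finset.mem_filter.mp hp).2
      have hq1 := (Finset.mem_filter.mp hq).2
      exact Prod.ext (hp1.trans hq1.symm) h
    have hfiber : ∀ i : Fin n,
        ∑ p ∈ Q₀.filter (fun p : Fin n × Fin n => p.1 = i), x p.1 * y p.1 p.2
          = x i * ∑ j ∈ C i, y i j := by
      intro i
      rw [hC, Finset.mul_sum, Finset.sum_image (hinj i)]
      refine Finset.sum_congr rfl fun p hp => ?_
      rw [(Finset.mem_filter.mp hp).2]
    have hLsum : (∑ i : Fin n, s (Fin.castLE hnn i))
        = ∑ i : Fin n, x i * ∑ j ∈ C i, y i j := by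
      rw [← sum_ite_lt hnn s, ← Finset.sum_filter, ← hT0]
      have h2 : ∑ k ∈ T₀, s k = ∑ p ∈ Q₀, x p.1 * y p.1 p.2 := by
        rw [hQ0, Finset.sum_image (fun a _ b _ h => e.injective h)]
        exact Finset.sum_congr rfl fun k _ => hs_val k
      rw [h2, ← Finset.sum_fiberwise Q₀ Prod.fst (fun p => x p.1 * y p.1 p.2)]
      exact Finset.sum_congr rfl fun i _ => hfiber i
    refine ⟨_, ⟨fun i => (C i).card, ?_, ?_, rfl⟩, ?_⟩
    · intro i
      exact le_trans (Finset.card_le_univ _) (le_of_eq (by simp))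
    · have h1 : ∀ i : Fin n, (C i).card
          = (Q₀.filter (fun p : Fin n × Fin n => p.1 = i)).card := by
        intro i
        rw [hC]
        exact Finset.card_image_of_injOn (fun p hp q hq h => hinj i p hp q hq h)
      rw [Finset.sum_congr rfl fun i _ => h1 i,
        ← Finset.card_eq_sum_card_fiberwise (fun p _ => Finset.mem_univ p.1),
        hQ0, Finset.card_image_of_injective _ e.injective, hT0card]
    · rw [hLsum]
      apply Finset.sum_le_sum
      intro i _
      apply mul_le_mul_of_nonneg_left _ (hx i)
      exact sum_subset_le_initial (y i) (hdec i) (C i)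
        (le_trans (Finset.card_le_univ _) (le_of_eq (by simp)))
  obtain ⟨v, hv, hlv⟩ := key_mem
  have hbdd : BddAbove S := ⟨_, fun w hw => key_ub w hw⟩
  apply le_antisymm
  · exact hlv.trans (le_csSup hbdd hv)
  · exact csSup_le ⟨v, hv⟩ key_ub
end
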